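/- Suppose a 3-uniform hypergraph G is the edge-disjoint union of copies of Ĥ_t placed on copies of H_t from an H_t-packing of K_n (i.e., the underlying graph triangles supporting distinct copies are edge-disjoint). Then G contains no 3 edges spanning at most 5 vertices. -/
import Mathlib


/-- The edge set of the graph `H_t` on `{a, b, x₁, …, x_{2t}}` (with `a = Sum.inl 0`,
`b = Sum.inl 1`, `xᵢ = Sum.inr i`). -/
def HtEdges (t : ℕ) : Finset (Finset (Fin 2 ⊕ Fin (2 * t))) :=
  {({Sum.inl 0, Sum.inl 1} : Finset (Fin 2 ⊕ Fin (2 * t)))}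
    ∪ Finset.univ.image (fun i : Fin (2 * t) =>
        ({Sum.inl 0, Sum.inr i} : Finset (Fin 2 ⊕ Fin (2 * t))))
    ∪ Finset.univ.image (fun i : Fin (2 * t) =>
        ({Sum.inl 1, Sum.inr i} : Finset (Fin 2 ⊕ Fin (2 * t))))
    ∪ Finset.univ.image (fun i : Fin t =>
        ({Sum.inr ⟨2 * i.1, by have := i.isLt; omega⟩,
          Sum.inr ⟨2 * i.1 + 1, by have := i.isLt; omega⟩} :
          Finset (Fin 2 ⊕ Fin (2 * t))))

/-- The edge set of the 3-uniform hypergraph `Ĥ_t` on the same vertex set. -/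
def HhatEdges (t : ℕ) : Finset (Finset (Fin 2 ⊕ Fin (2 * t))) :=
  Finset.univ.image (fun i : Fin t =>
      ({Sum.inl 0, Sum.inr ⟨2 * i.1, by have := i.isLt; omega⟩,
        Sum.inr ⟨2 * i.1 + 1, by have := i.isLt; omega⟩} : Finset (Fin 2 ⊕ Fin (2 * t))))
    ∪ Finset.univ.image (fun i : Fin t =>
      ({Sum.inl 1, Sum.inr ⟨2 * i.1, by have := i.isLt; omega⟩,
        Sum.inr ⟨2 * i.1 + 1, by have := i.isLt; omega⟩} : Finset (Fin 2 ⊕ Fin (2 * t))))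

namespace Stmt8

open Finset

variable {t n : ℕ} {ι : Type}

abbrev V (t : ℕ) := Fin 2 ⊕ Fin (2 * t)

def lo (i : Fin t) : Fin (2 * t) := ⟨2 * i.1, by have := i.isLt; omega⟩
def hi (i : Fin t) : Fin (2 * t) := ⟨2 * i.1 + 1, by have := i.isLt; omega⟩

def Hh (v : Fin 2) (i : Fin t) : Finset (V t) := {Sum.inl v, Sum.inr (lo i), Sum.inr (hi i)}

def K (i : Fin t) : Finset (V t) := {Sum.inl 0, Sum.inl 1, Sum.inr (lo i), Sum.inr (hi i)}

lemma mem_HhatEdges_iff {h : Finset (V t)} : h ∈ HhatEdges t ↔ ∃ v i, h = Hh v i := by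
  constructor
  · intro hh
    simp only [HhatEdges, mem_union, mem_image, mem_univ, true_and] at hh
    rcases hh with ⟨i, rfl⟩ | ⟨i, rfl⟩
    · exact ⟨0, i, rfl⟩
    · exact ⟨1, i, rfl⟩
  · rintro ⟨v, i, rfl⟩
    simp only [HhatEdges, mem_union, mem_image, mem_univ, true_and]
    fin_cases v
    · exact Or.inl ⟨i, rfl⟩
    · exact Or.inr ⟨i, rfl⟩

lemma AB_mem : ({Sum.inl 0, Sum.inl 1} : Finset (V t)) ∈ HtEdges t := by
  unfold HtEdges
  exact mem_union_left _ (mem_union_left _ (mem_union_left _ (mem_singleton_self _)))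

lemma VX_mem (v : Fin 2) (j : Fin (2 * t)) :
    ({Sum.inl v, Sum.inr j} : Finset (V t)) ∈ HtEdges t := by
  unfold HtEdges
  fin_cases v
  · exact mem_union_left _ (mem_union_left _ (mem_union_right _
      (mem_image.mpr ⟨j, mem_univ _, rfl⟩)))
  · exact mem_union_left _ (mem_union_right _ (mem_image.mpr ⟨j, mem_univ _, rfl⟩))

lemma XX_mem (i : Fin t) :
    ({Sum.inr (lo i), Sum.inr (hi i)} : Finset (V t)) ∈ HtEdges t := by
  unfold HtEdges
  exact mem_union_right _ (mem_image.mpr ⟨i, mem_univ _, rfl⟩)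

lemma pairK (i : Fin t) : ∀ p ∈ K i, ∀ q ∈ K i, p ≠ q → ({p, q} : Finset (V t)) ∈ HtEdges t := by
  intro p hp q hq hne
  simp only [K, mem_insert, mem_singleton] at hp hq
  rcases hp with rfl | rfl | rfl | rfl <;> rcases hq with rfl | rfl | rfl | rfl <;>
    first
      | exact absurd rfl hne
      | exact AB_mem
      | exact VX_mem _ _
      | exact XX_mem i
      | (rw [Finset.pair_comm]
         first
          | exact AB_mem
          | exact VX_mem _ _
          | exact XX_mem i)

lemma Hh_subset_K (v : Fin 2) (i : Fin t) : Hh v i ⊆ K i := by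
  intro x hx
  fin_cases v <;> simp only [Hh, K, mem_insert, mem_singleton] at hx ⊢ <;> tauto

lemma pairHh (v : Fin 2) (i : Fin t) :
    ∀ p ∈ Hh v i, ∀ q ∈ Hh v i, p ≠ q → ({p, q} : Finset (V t)) ∈ HtEdges t :=
  fun p hp q hq h => pairK i p (Hh_subset_K v i hp) q (Hh_subset_K v i hq) h

lemma card_Hh (v : Fin 2) (i : Fin t) : (Hh v i).card = 3 :=
  Finset.card_eq_three.mpr ⟨_, _, _, by simp, by simp,
    by simp [lo, hi, Fin.ext_iff], rfl⟩

lemma card_K (i : Fin t) : (K i).card = 4 := by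
  rw [K, card_insert_of_notMem (by simp), card_insert_of_notMem (by simp),
    card_insert_of_notMem (by simp [lo, hi, Fin.ext_iff]), card_singleton]

lemma Hh_inter_subset {v v' : Fin 2} {i i' : Fin t} (hii : i ≠ i') :
    Hh v i ∩ Hh v' i' ⊆ {Sum.inl v} := by
  have hval : i.1 ≠ i'.1 := fun h => hii (Fin.ext h)
  intro x hx
  simp only [Hh, mem_inter, mem_insert, mem_singleton] at hx ⊢
  obtain ⟨h1, h2⟩ := hx
  rcases h1 with rfl | rfl | rfl
  · rfl
  all_goals
    rcases h2 with h2 | h2 | h2 <;>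
      simp only [Sum.inr.injEq, lo, hi, Fin.mk.injEq] at h2 <;>
        first | omega | exact absurd h2 (by simp)

lemma K_inter_Hh_subset {v₃ : Fin 2} {i₃ i : Fin t} (hii : i₃ ≠ i) :
    K i ∩ Hh v₃ i₃ ⊆ {Sum.inl v₃} := by
  have hval : i₃.1 ≠ i.1 := fun h => hii (Fin.ext h)
  intro x hx
  simp only [K, Hh, mem_inter, mem_insert, mem_singleton] at hx ⊢
  obtain ⟨h1, h2⟩ := hx
  rcases h2 with rfl | rfl | rfl
  · rfl
  all_goals
    rcases h1 with h1 | h1 | h1 | h1 <;>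
      simp only [Sum.inr.injEq, lo, hi, Fin.mk.injEq] at h1 <;>
        first | omega | exact absurd h1 (by simp)

lemma exists_pair_edge {g : V t → Fin n}
    {S : Finset (V t)} (hS : ∀ p ∈ S, ∀ q ∈ S, p ≠ q → ({p, q} : Finset (V t)) ∈ HtEdges t)
    {u w : Fin n} (hu : u ∈ S.image g) (hw : w ∈ S.image g) (huw : u ≠ w) :
    ∃ ed ∈ HtEdges t, ({u, w} : Finset (Fin n)) = ed.image g := by
  obtain ⟨p, hp, rfl⟩ := mem_image.mp hu
  obtain ⟨q, hq, rfl⟩ := mem_image.mp hw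
  have hpq : p ≠ q := fun h => huw (by rw [h])
  exact ⟨{p, q}, hS p hp q hq hpq, by simp⟩

lemma inter_card_le_one (f : ι → V t → Fin n)
    (hinj : ∀ c, Function.Injective (f c))
    (hdisj : ∀ c c', c ≠ c' → ∀ e ∈ HtEdges t, ∀ e' ∈ HtEdges t,
      Finset.image (f c) e ≠ Finset.image (f c') e')
    {c c' : ι} (hcc : c ≠ c') {S S' : Finset (V t)}
    (hS : ∀ p ∈ S, ∀ q ∈ S, p ≠ q → ({p, q} : Finset (V t)) ∈ HtEdges t)
    (hS' : ∀ p ∈ S', ∀ q ∈ S', p ≠ q → ({p, q} : Finset (V t)) ∈ HtEdges t) :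
    (S.image (f c) ∩ S'.image (f c')).card ≤ 1 := by
  by_contra hlt
  push_neg at hlt
  obtain ⟨u, hu, w, hw, huw⟩ := Finset.one_lt_card.mp hlt
  rw [mem_inter] at hu hw
  obtain ⟨g₁, hg₁, he₁⟩ := exists_pair_edge hS hu.1 hw.1 huw
  obtain ⟨g₂, hg₂, he₂⟩ := exists_pair_edge hS' hu.2 hw.2 huw
  exact hdisj c c' hcc g₁ hg₁ g₂ hg₂ (he₁ ▸ he₂)

lemma card_union3 {α : Type*} [DecidableEq α] {A B C : Finset α}
    (hA : A.card = 3) (hB : B.card = 3) (hC : C.card = 3)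
    (h12 : (A ∩ B).card ≤ 1) (h13 : (A ∩ C).card ≤ 1) (h23 : (B ∩ C).card ≤ 1) :
    5 < (A ∪ B ∪ C).card := by
  have h1 := Finset.card_union_add_card_inter A B
  have h2 := Finset.card_union_add_card_inter (A ∪ B) C
  have h3 : ((A ∪ B) ∩ C).card ≤ (A ∩ C).card + (B ∩ C).card := by
    rw [Finset.union_inter_distrib_right]
    exact Finset.card_union_le _ _
  omega

lemma main_pair (f : ι → V t → Fin n)
    (hinj : ∀ c, Function.Injective (f c))
    (hdisj : ∀ c c', c ≠ c' → ∀ e ∈ HtEdges t, ∀ e' ∈ HtEdges t,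
      Finset.image (f c) e ≠ Finset.image (f c') e')
    (c₁ c₂ c₃ : ι) (h₁ h₂ h₃ : Finset (V t))
    (hh₁ : h₁ ∈ HhatEdges t) (hh₂ : h₂ ∈ HhatEdges t) (hh₃ : h₃ ∈ HhatEdges t)
    (hne12 : h₁.image (f c₁) ≠ h₂.image (f c₂))
    (hne13 : h₁.image (f c₁) ≠ h₃.image (f c₃))
    (hne23 : h₂.image (f c₂) ≠ h₃.image (f c₃))
    (h2le : 2 ≤ (h₁.image (f c₁) ∩ h₂.image (f c₂)).card) :
    5 < (h₁.image (f c₁) ∪ h₂.image (f c₂) ∪ h₃.image (f c₃)).card := by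
  obtain ⟨v₁, i₁, rfl⟩ := mem_HhatEdges_iff.mp hh₁
  obtain ⟨v₂, i₂, rfl⟩ := mem_HhatEdges_iff.mp hh₂
  obtain ⟨v₃, i₃, rfl⟩ := mem_HhatEdges_iff.mp hh₃
  -- the first two copies coincide
  have hc12 : c₁ = c₂ := by
    by_contra hc
    have := inter_card_le_one f hinj hdisj hc (pairHh v₁ i₁) (pairHh v₂ i₂)
    omega
  subst hc12
  -- the first two pair indices coincide
  have hi12 : i₁ = i₂ := by
    by_contra hii
    have hsub : (Hh v₁ i₁).image (f c₁) ∩ (Hh v₂ i₂).image (f c₁)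
        ⊆ ({Sum.inl v₁} : Finset (V t)).image (f c₁) := by
      rw [← Finset.image_inter _ _ (hinj c₁)]
      exact image_subset_image (Hh_inter_subset hii)
    have := card_le_card hsub
    simp only [image_singleton, card_singleton] at this
    omega
  subst hi12
  have hv : v₁ ≠ v₂ := fun hv => hne12 (by rw [hv])
  -- the union of the first two edges is the image of a K₄ vertex set
  have hcover : ∀ u : Fin 2, u = v₁ ∨ u = v₂ := by
    intro u
    have h1 := u.isLt; have h2 := v₁.isLt; have h3 := v₂.isLt
    have h4 : v₁.1 ≠ v₂.1 := fun h => hv (Fin.ext h)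
    rw [Fin.ext_iff, Fin.ext_iff]
    omega
  have hUK : Hh v₁ i₁ ∪ Hh v₂ i₁ = K i₁ := by
    refine subset_antisymm (union_subset (Hh_subset_K _ _) (Hh_subset_K _ _)) ?_
    intro x hx
    simp only [K, mem_insert, mem_singleton] at hx
    rcases hx with rfl | rfl | rfl | rfl
    · rcases hcover 0 with h | h <;> rw [h]
      · exact mem_union_left _ (by simp [Hh])
      · exact mem_union_right _ (by simp [Hh])
    · rcases hcover 1 with h | h <;> rw [h]
      · exact mem_union_left _ (by simp [Hh])
      · exact mem_union_right _ (by simp [Hh])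
    · exact mem_union_left _ (by simp [Hh])
    · exact mem_union_left _ (by simp [Hh])
  have hU : (Hh v₁ i₁).image (f c₁) ∪ (Hh v₂ i₁).image (f c₁) = (K i₁).image (f c₁) := by
    rw [← image_union, hUK]
  have hcardU : ((Hh v₁ i₁).image (f c₁) ∪ (Hh v₂ i₁).image (f c₁)).card = 4 := by
    rw [hU, card_image_of_injective _ (hinj c₁), card_K]
  -- the third edge meets that K₄ in at most one vertex
  have hI : (((Hh v₁ i₁).image (f c₁) ∪ (Hh v₂ i₁).image (f c₁))
      ∩ (Hh v₃ i₃).image (f c₃)).card ≤ 1 := by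
    rw [hU]
    by_cases hc : c₁ = c₃
    · subst hc
      by_cases hi13 : i₃ = i₁
      · subst hi13
        exfalso
        have hv31 : v₃ = v₁ ∨ v₃ = v₂ := by
          have h1 := v₃.isLt; have h2 := v₁.isLt; have h3 := v₂.isLt
          have h4 : v₁.1 ≠ v₂.1 := fun h => hv (Fin.ext h)
          rw [Fin.ext_iff, Fin.ext_iff]
          omega
        rcases hv31 with rfl | rfl
        · exact hne13 rfl
        · exact hne23 rfl
      · have hsub : (K i₁).image (f c₁) ∩ (Hh v₃ i₃).image (f c₁)
            ⊆ ({Sum.inl v₃} : Finset (V t)).image (f c₁) := by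
          rw [← Finset.image_inter _ _ (hinj c₁)]
          exact image_subset_image (K_inter_Hh_subset hi13)
        have := card_le_card hsub
        simp only [image_singleton, card_singleton] at this
        exact this
    · exact inter_card_le_one f hinj hdisj hc (pairK i₁) (pairHh v₃ i₃)
  have h2 := Finset.card_union_add_card_inter
    ((Hh v₁ i₁).image (f c₁) ∪ (Hh v₂ i₁).image (f c₁)) ((Hh v₃ i₃).image (f c₃))
  have h3 : ((Hh v₃ i₃).image (f c₃)).card = 3 := by
    rw [card_image_of_injective _ (hinj c₃), card_Hh]
  omega

end Stmt8

/-- If `G` is obtained from an `H_t`-packing of `K_n` (a family of injectively embedded,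
pairwise edge-disjoint copies of `H_t`) by placing a copy of `Ĥ_t` on each copy of `H_t`,
then `G` contains no 3 edges spanning at most 5 vertices. -/
theorem stmt_8 (n t : ℕ) {ι : Type} (f : ι → (Fin 2 ⊕ Fin (2 * t)) → Fin n)
    (hinj : ∀ c, Function.Injective (f c))
    (hdisj : ∀ c c', c ≠ c' → ∀ e ∈ HtEdges t, ∀ e' ∈ HtEdges t,
      Finset.image (f c) e ≠ Finset.image (f c') e')
    (G : Set (Finset (Fin n)))
    (hG : G = {e | ∃ c, ∃ h ∈ HhatEdges t, e = Finset.image (f c) h}) :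
    ∀ e₁ ∈ G, ∀ e₂ ∈ G, ∀ e₃ ∈ G,
      e₁ ≠ e₂ → e₁ ≠ e₃ → e₂ ≠ e₃ → 5 < (e₁ ∪ e₂ ∪ e₃).card := by
  subst hG
  rintro e₁ ⟨c₁, h₁, hh₁, rfl⟩ e₂ ⟨c₂, h₂, hh₂, rfl⟩ e₃ ⟨c₃, h₃, hh₃, rfl⟩ hne12 hne13 hne23
  by_cases h12 : 2 ≤ (h₁.image (f c₁) ∩ h₂.image (f c₂)).card
  · exact Stmt8.main_pair f hinj hdisj c₁ c₂ c₃ h₁ h₂ h₃ hh₁ hh₂ hh₃ hne12 hne13 hne23 h12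
  by_cases h13 : 2 ≤ (h₁.image (f c₁) ∩ h₃.image (f c₃)).card
  · have := Stmt8.main_pair f hinj hdisj c₁ c₃ c₂ h₁ h₃ h₂ hh₁ hh₃ hh₂ hne13 hne12
      hne23.symm h13
    rwa [Finset.union_right_comm] at this
  by_cases h23 : 2 ≤ (h₂.image (f c₂) ∩ h₃.image (f c₃)).card
  · have := Stmt8.main_pair f hinj hdisj c₂ c₃ c₁ h₂ h₃ h₁ hh₂ hh₃ hh₁ hne23 hne12.symm
      hne13.symm h23
    rwa [Finset.union_comm, ← Finset.union_assoc] at this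
  · have hc : ∀ (c : ι) (h : Finset (Stmt8.V t)), h ∈ HhatEdges t →
        (h.image (f c)).card = 3 := by
      intro c h hh
      obtain ⟨v, i, rfl⟩ := Stmt8.mem_HhatEdges_iff.mp hh
      rw [Finset.card_image_of_injective _ (hinj c), Stmt8.card_Hh]
    exact Stmt8.card_union3 (hc c₁ h₁ hh₁) (hc c₂ h₂ hh₂) (hc c₃ h₃ hh₃)
      (by omega) (by omega) (by omega)
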